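/- Let C_n be the cycle on n ≥ 3 vertices, so that κ(C_n) = n − 2 if n is even and κ(C_n) = n − 1 if n is odd. For every real number k with 1 ≤ k ≤ κ(C_n), dim_f^k(C_n) = k·dim_f(C_n); explicitly, dim_f^k(C_n) = k·n/(n − 2) if n is even and dim_f^k(C_n) = k·n/(n − 1) if n is odd. -/

import Mathlib

/-!
On `C_n`, viewed as `Fin n` with addition mod `n`, the distance is `d(u, v) = cycleNorm (v - u)`,
so `d(x, z) = d(y, z)` iff `z + z = x + y` and `|R{x,y}| = n - #{z | z + z = x + y}`. Doubling is
a group homomorphism, so no element has more halves than `0`, which has two halves for even `n`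
and one for odd `n`; hence `κ(C_n) = n - #{z | z + z = 0}`. The `n` pairs `(i - 1, i + 1)` cover
every vertex exactly `κ` times, so summing the constraints of a `k`-resolving function `g` over
them gives `κ · ∑ g ≥ n k`; the constant function `k / κ` attains this bound.
-/

open Finset

namespace FracDim

variable {V : Type*}

/-- `R{x,y}`: the set of vertices `z` with `d(x,z) ≠ d(y,z)`. -/
noncomputable def resSet [Fintype V] (G : SimpleGraph V) (x y : V) : Finset V :=
  Finset.univ.filter (fun z => G.dist x z ≠ G.dist y z)

/-- `κ(G) = min { |R{x,y}| : x ≠ y }`. -/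
noncomputable def kappa [Fintype V] (G : SimpleGraph V) : ℕ :=
  sInf {n : ℕ | ∃ x y : V, x ≠ y ∧ (resSet G x y).card = n}

/-- A `k`-resolving function: `g : V → [0,1]` with `g(R{x,y}) ≥ k` for all distinct `x, y`. -/
def IsKResolving [Fintype V] (G : SimpleGraph V) (k : ℝ) (g : V → ℝ) : Prop :=
  (∀ v, 0 ≤ g v ∧ g v ≤ 1) ∧
    ∀ x y : V, x ≠ y → k ≤ ∑ z ∈ resSet G x y, g z

/-- The fractional `k`-metric dimension of `G`. -/
noncomputable def fracKDim [Fintype V] (G : SimpleGraph V) (k : ℝ) : ℝ :=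
  sInf {s : ℝ | ∃ g : V → ℝ, IsKResolving G k g ∧ s = ∑ v, g v}

/-- The fractional metric dimension of `G`. -/
noncomputable def fracDim [Fintype V] (G : SimpleGraph V) : ℝ :=
  fracKDim G 1

end FracDim

namespace FracDim

variable {V : Type*} [Fintype V] {G : SimpleGraph V} {k : ℝ}

lemma kappa_le_card_resSet {x y : V} (hxy : x ≠ y) : kappa G ≤ #(resSet G x y) :=
  Nat.sInf_le ⟨x, y, hxy, rfl⟩

lemma kappa_eq_card_resSet {x y : V} (hxy : x ≠ y)
    (hmin : ∀ a b, a ≠ b → #(resSet G x y) ≤ #(resSet G a b)) :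
    kappa G = #(resSet G x y) :=
  (kappa_le_card_resSet hxy).antisymm <| le_csInf ⟨_, x, y, hxy, rfl⟩ <| by
    rintro _ ⟨a, b, hab, rfl⟩
    exact hmin a b hab

lemma isKResolving_const (hk : 0 < k) (hkκ : k ≤ kappa G) :
    IsKResolving G k fun _ ↦ k / kappa G := by
  have hκ : (0 : ℝ) < kappa G := hk.trans_le hkκ
  refine ⟨fun _ ↦ ⟨by positivity, div_le_one_of_le₀ hkκ hκ.le⟩, fun x y hxy ↦ ?_⟩
  have hcard : (kappa G : ℝ) ≤ #(resSet G x y) := by exact_mod_cast kappa_le_card_resSet hxy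
  rw [sum_const, nsmul_eq_mul]
  calc k = kappa G * (k / kappa G) := by field_simp
    _ ≤ #(resSet G x y) * (k / kappa G) := by gcongr

lemma fracKDim_le_sum {g : V → ℝ} (hg : IsKResolving G k g) : fracKDim G k ≤ ∑ v, g v :=
  csInf_le ⟨0, by rintro _ ⟨g, hg, rfl⟩; exact sum_nonneg fun v _ ↦ (hg.1 v).1⟩ ⟨g, hg, rfl⟩

lemma le_fracKDim {b : ℝ} (hne : ∃ g, IsKResolving G k g)
    (h : ∀ g, IsKResolving G k g → b ≤ ∑ v, g v) : b ≤ fracKDim G k := by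
  obtain ⟨g, hg⟩ := hne
  exact le_csInf ⟨_, g, hg, rfl⟩ <| by rintro _ ⟨g, hg, rfl⟩; exact h g hg

lemma card_mul_le_mul_sum_of_cover [DecidableEq V] {ι : Type*} [Fintype ι] (x y : ι → V)
    (hxy : ∀ i, x i ≠ y i) {m : ℕ} (hcover : ∀ z, #{i | z ∈ resSet G (x i) (y i)} ≤ m)
    {g : V → ℝ} (hg : IsKResolving G k g) : Fintype.card ι * k ≤ m * ∑ v, g v :=
  calc Fintype.card ι * k = ∑ _i : ι, k := by simp
    _ ≤ ∑ i, ∑ z ∈ resSet G (x i) (y i), g z := sum_le_sum fun i _ ↦ hg.2 _ _ (hxy i)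
    _ = ∑ z, ∑ _i ∈ {i | z ∈ resSet G (x i) (y i)}, g z :=
      sum_comm' fun i z ↦ by simp
    _ = ∑ z, #{i | z ∈ resSet G (x i) (y i)} * g z := by simp
    _ ≤ ∑ z, m * g z := sum_le_sum fun z _ ↦ by gcongr; exacts [(hg.1 z).1, hcover z]
    _ = m * ∑ v, g v := (mul_sum ..).symm

lemma fracKDim_eq_of_cover [DecidableEq V] (x y : V → V) (hxy : ∀ i, x i ≠ y i)
    (hcover : ∀ z, #{i | z ∈ resSet G (x i) (y i)} ≤ kappa G) (hk : 0 < k)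
    (hkκ : k ≤ kappa G) : fracKDim G k = k * Fintype.card V / kappa G := by
  refine le_antisymm ?_ (le_fracKDim ⟨_, isKResolving_const hk hkκ⟩ fun g hg ↦ ?_)
  · refine (fracKDim_le_sum (isKResolving_const hk hkκ)).trans_eq ?_
    rw [sum_const, card_univ, nsmul_eq_mul, mul_comm, div_mul_eq_mul_div]
  · rw [div_le_iff₀' (hk.trans_le hkκ), mul_comm k]
    exact card_mul_le_mul_sum_of_cover x y hxy hcover hg

end FracDim

namespace Fin

lemma val_add_eq_or {n : ℕ} (a b : Fin n) :
    (a + b).val = a.val + b.val ∨ (a + b).val + n = a.val + b.val := by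
  have := a.isLt; have := b.isLt
  rw [val_add_eq_ite]; split_ifs <;> omega

variable {n : ℕ} [NeZero n]

lemma val_neg_add_val_eq_or (a : Fin n) : (-a).val + a.val = 0 ∨ (-a).val + a.val = n := by
  simpa [eq_comm] using val_add_eq_or (-a) a

lemma add_self_eq_zero_iff (a : Fin n) : a + a = 0 ↔ a.val = 0 ∨ 2 * a.val = n := by
  have := val_add_eq_or a a; have := a.isLt; have := (a + a).isLt
  rw [Fin.ext_iff, val_zero]
  generalize (a + a).val = s at *
  omega

lemma card_filter_add_self_eq_zero_of_even (hn : Even n) : #{z : Fin n | z + z = 0} = 2 := by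
  obtain ⟨m, rfl⟩ := hn
  have hm : 0 < m := by have := NeZero.ne (m + m); omega
  rw [card_eq_two]
  refine ⟨0, ⟨m, by omega⟩, by simp [Fin.ext_iff]; omega, ?_⟩
  ext z
  simp only [mem_filter, mem_univ, true_and, add_self_eq_zero_iff, mem_insert, mem_singleton]
  simp only [Fin.ext_iff, val_zero]
  omega

lemma card_filter_add_self_eq_zero_of_odd (hn : Odd n) : #{z : Fin n | z + z = 0} = 1 := by
  obtain ⟨m, rfl⟩ := hn
  rw [card_eq_one]
  refine ⟨0, ?_⟩
  ext z
  simp only [mem_filter, mem_univ, true_and, add_self_eq_zero_iff, mem_singleton]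
  simp only [Fin.ext_iff, val_zero]
  omega

lemma sub_one_ne_add_one (hn : 3 ≤ n) (i : Fin n) : i - 1 ≠ i + 1 := by
  have h1 : (1 : Fin n).val = 1 := by rw [val_one']; exact Nat.mod_eq_of_lt (by omega)
  have := val_add_eq_or (1 : Fin n) 1; have := (1 + 1 : Fin n).isLt
  intro h
  rw [sub_eq_iff_eq_add, add_assoc, left_eq_add, Fin.ext_iff, val_zero] at h
  generalize (1 + 1 : Fin n).val = s at *
  omega

end Fin

section Halves

variable {A : Type*} [AddCommGroup A] [Fintype A] [DecidableEq A]

lemma card_filter_add_self_eq_add_self (a : A) :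
    #{z | z + z = a + a} = #{z : A | z + z = 0} := by
  simpa [← two_nsmul] using
    AddMonoidHom.card_fiber_eq_of_mem_range (nsmulAddMonoidHom 2 : A →+ A) ⟨a, rfl⟩ ⟨0, rfl⟩

lemma card_filter_add_self_eq_le (b : A) : #{z | z + z = b} ≤ #{z : A | z + z = 0} := by
  by_cases hb : ∃ a, a + a = b
  · obtain ⟨a, rfl⟩ := hb
    exact (card_filter_add_self_eq_add_self a).le
  · push Not at hb
    simp [filter_false_of_mem fun z _ ↦ hb z]

end Halves

section CycleNorm

variable {n : ℕ}

def cycleNorm (a : Fin n) : ℕ := min a.val (-a).val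

lemma cycleNorm_neg (a : Fin n) : cycleNorm (-a) = cycleNorm a := by
  simp [cycleNorm, min_comm]

lemma cycleNorm_add_le [NeZero n] (a b : Fin n) :
    cycleNorm (a + b) ≤ cycleNorm a + cycleNorm b := by
  have := Fin.val_add_eq_or a b
  have := Fin.val_neg_add_val_eq_or a; have := Fin.val_neg_add_val_eq_or b
  have := Fin.val_neg_add_val_eq_or (a + b)
  have := a.isLt; have := b.isLt; have := (-a).isLt; have := (-b).isLt
  have := (a + b).isLt; have := (-(a + b)).isLt
  unfold cycleNorm
  generalize (a + b).val = s at *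
  omega

lemma cycleNorm_eq_cycleNorm_iff [NeZero n] {a b : Fin n} :
    cycleNorm a = cycleNorm b ↔ a = b ∨ a = -b := by
  refine ⟨fun h ↦ ?_, by rintro (rfl | rfl) <;> simp [cycleNorm_neg]⟩
  have := Fin.val_neg_add_val_eq_or a; have := Fin.val_neg_add_val_eq_or b
  have := a.isLt; have := b.isLt; have := (-a).isLt; have := (-b).isLt
  unfold cycleNorm at h
  simp only [Fin.ext_iff]
  omega

end CycleNorm

namespace SimpleGraph

variable {V : Type*} {G : SimpleGraph V}

lemma Walk.le_add_length {f : V → ℕ} (hf : ∀ a b, G.Adj a b → f b ≤ f a + 1) {u v : V}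
    (p : G.Walk u v) : f v ≤ f u + p.length := by
  induction p with
  | nil => simp
  | cons h _ ih => have := hf _ _ h; simp only [Walk.length_cons]; omega

lemma Reachable.le_add_dist {f : V → ℕ} (hf : ∀ a b, G.Adj a b → f b ≤ f a + 1) {u v : V}
    (h : G.Reachable u v) : f v ≤ f u + G.dist u v := by
  obtain ⟨p, hp⟩ := h.exists_walk_length_eq_dist
  exact hp ▸ p.le_add_length hf

variable {n : ℕ} [NeZero n]

lemma cycleGraph_connected' : (cycleGraph n).Connected := by
  obtain ⟨m, rfl⟩ := Nat.exists_eq_succ_of_ne_zero (NeZero.ne n)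
  exact cycleGraph_connected

lemma cycleNorm_sub_le_one_of_adj {a b : Fin n} (h : (cycleGraph n).Adj a b) :
    cycleNorm (b - a) ≤ 1 := by
  rw [cycleGraph_adj', ← neg_sub] at h
  unfold cycleNorm
  omega

open Fin.NatCast in
lemma cycleGraph_dist_add_le (hn : 2 ≤ n) (u a : Fin n) :
    (cycleGraph n).dist u (u + a) ≤ a.val := by
  suffices ∀ m : ℕ, (cycleGraph n).dist u (u + m) ≤ m by simpa using this a.val
  intro m
  induction m with
  | zero => simp
  | succ m ih =>
    have hadj : (cycleGraph n).Adj (u + m) (u + (m + 1 : ℕ)) := by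
      rw [cycleGraph_adj']
      right
      rw [Nat.cast_succ, ← add_assoc, add_sub_cancel_left, Fin.val_one']
      exact Nat.mod_eq_of_lt hn
    have := cycleGraph_connected'.dist_triangle (u := u) (v := u + m) (w := u + (m + 1 : ℕ))
    rw [dist_eq_one_iff_adj.mpr hadj] at this
    omega

lemma cycleGraph_dist (hn : 2 ≤ n) (u v : Fin n) :
    (cycleGraph n).dist u v = cycleNorm (v - u) := by
  refine le_antisymm (le_min ?_ ?_) ?_
  · simpa using cycleGraph_dist_add_le hn u (v - u)
  · rw [← neg_sub, dist_comm]
    simpa using cycleGraph_dist_add_le hn v (u - v)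
  · simpa [cycleNorm] using cycleGraph_connected'.preconnected u v |>.le_add_dist
      (f := fun w ↦ cycleNorm (w - u)) fun a b hab ↦ by
        have := cycleNorm_add_le (b - a) (a - u)
        have := cycleNorm_sub_le_one_of_adj hab
        simp only [sub_add_sub_cancel] at *
        omega

lemma cycleGraph_dist_eq_dist_iff (hn : 2 ≤ n) {x y : Fin n} (hxy : x ≠ y) (z : Fin n) :
    (cycleGraph n).dist x z = (cycleGraph n).dist y z ↔ z + z = x + y := by
  rw [cycleGraph_dist hn, cycleGraph_dist hn, cycleNorm_eq_cycleNorm_iff, sub_right_inj,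
    or_iff_right hxy, neg_sub, sub_eq_sub_iff_add_eq_add, add_comm y]

end SimpleGraph

namespace FracDim

open SimpleGraph

variable {n : ℕ} [NeZero n]

lemma mem_resSet_cycleGraph (hn : 2 ≤ n) {x y : Fin n} (hxy : x ≠ y) (z : Fin n) :
    z ∈ resSet (cycleGraph n) x y ↔ z + z ≠ x + y := by
  simp [resSet, cycleGraph_dist_eq_dist_iff hn hxy]

lemma card_resSet_cycleGraph (hn : 2 ≤ n) {x y : Fin n} (hxy : x ≠ y) :
    #(resSet (cycleGraph n) x y) = n - #{z : Fin n | z + z = x + y} := by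
  have : resSet (cycleGraph n) x y = ({z | ¬z + z = x + y} : Finset (Fin n)) := by
    ext z; simp [mem_resSet_cycleGraph hn hxy]
  rw [this, filter_not, card_univ_sdiff, Fintype.card_fin]

lemma kappa_cycleGraph (hn : 3 ≤ n) : kappa (cycleGraph n) = n - #{z : Fin n | z + z = 0} := by
  have hne : (-1 : Fin n) ≠ 1 := by simpa using Fin.sub_one_ne_add_one hn 0
  rw [kappa_eq_card_resSet hne fun a b hab ↦ ?_, card_resSet_cycleGraph (by omega) hne,
    neg_add_cancel]
  rw [card_resSet_cycleGraph (by omega) hne, card_resSet_cycleGraph (by omega) hab, neg_add_cancel]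
  exact Nat.sub_le_sub_left (card_filter_add_self_eq_le _) n

lemma card_filter_mem_resSet_cycleGraph (hn : 3 ≤ n) (z : Fin n) :
    #{i | z ∈ resSet (cycleGraph n) (i - 1) (i + 1)} = n - #{z : Fin n | z + z = 0} := by
  simp_rw [mem_resSet_cycleGraph (by omega) (Fin.sub_one_ne_add_one hn _), sub_add_add_cancel,
    ne_comm (a := z + z)]
  rw [filter_not, card_univ_sdiff, Fintype.card_fin, card_filter_add_self_eq_add_self]

end FracDim

open FracDim in
/-- For the cycle `C_n` on `n ≥ 3` vertices: `κ(C_n) = n − 2` if `n` is even and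
`κ(C_n) = n − 1` if `n` is odd; and for every real `k` with `1 ≤ k ≤ κ(C_n)`,
`dim_f^k(C_n) = k · dim_f(C_n)`, explicitly `k·n/(n − 2)` if `n` is even and
`k·n/(n − 1)` if `n` is odd. -/
theorem fracKDim_cycle (n : ℕ) (hn : 3 ≤ n) :
    (Even n → kappa (SimpleGraph.cycleGraph n) = n - 2) ∧
      (Odd n → kappa (SimpleGraph.cycleGraph n) = n - 1) ∧
      ∀ k : ℝ, 1 ≤ k → k ≤ (kappa (SimpleGraph.cycleGraph n) : ℝ) →
        fracKDim (SimpleGraph.cycleGraph n) k = k * fracDim (SimpleGraph.cycleGraph n) ∧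
          (Even n → fracKDim (SimpleGraph.cycleGraph n) k = k * (n : ℝ) / ((n : ℝ) - 2)) ∧
          (Odd n → fracKDim (SimpleGraph.cycleGraph n) k = k * (n : ℝ) / ((n : ℝ) - 1)) := by
  have : NeZero n := ⟨by omega⟩
  have hκ := kappa_cycleGraph hn
  have hκ_even (he : Even n) : kappa (SimpleGraph.cycleGraph n) = n - 2 := by
    rw [hκ, Fin.card_filter_add_self_eq_zero_of_even he]
  have hκ_odd (ho : Odd n) : kappa (SimpleGraph.cycleGraph n) = n - 1 := by
    rw [hκ, Fin.card_filter_add_self_eq_zero_of_odd ho]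
  have hdim (k : ℝ) (hk : 0 < k) (hkκ : k ≤ kappa (SimpleGraph.cycleGraph n)) :
      fracKDim (SimpleGraph.cycleGraph n) k = k * n / kappa (SimpleGraph.cycleGraph n) := by
    simpa using fracKDim_eq_of_cover (fun i ↦ i - 1) (· + 1) (Fin.sub_one_ne_add_one hn)
      (fun z ↦ (card_filter_mem_resSet_cycleGraph hn z).trans hκ.symm |>.le) hk hkκ
  refine ⟨hκ_even, hκ_odd, fun k hk hkκ ↦ ⟨?_, fun he ↦ ?_, fun ho ↦ ?_⟩⟩
  · rw [fracDim, hdim k (by linarith) hkκ, hdim 1 one_pos (hk.trans hkκ), mul_div_assoc, one_mul]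
  · rw [hdim k (by linarith) hkκ, hκ_even he, Nat.cast_sub (by omega), Nat.cast_two]
  · rw [hdim k (by linarith) hkκ, hκ_odd ho, Nat.cast_sub (by omega), Nat.cast_one]
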